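/- Let R' = k[m², m³, n², n³] and let 0 → M₁ → M₂ → M₃ → 0 be a short exact sequence of R'-modules. If two of the three modules M₁, M₂, M₃ have property [P2], then so does the third. -/

import Mathlib

open MvPolynomial

universe u v

/-- The subalgebra `R' = k[m², m³, n², n³]` of `k[m,n]`, with `m = X 0`, `n = X 1`. -/
noncomputable def Rc2 (k : Type u) [Field k] : Subalgebra k (MvPolynomial (Fin 2) k) :=
  Algebra.adjoin k {(X 0 : MvPolynomial (Fin 2) k) ^ 2, (X 0 : MvPolynomial (Fin 2) k) ^ 3,
    (X 1 : MvPolynomial (Fin 2) k) ^ 2, (X 1 : MvPolynomial (Fin 2) k) ^ 3}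

/-- The element `m²` of `R'`. -/
noncomputable def mm2 (k : Type u) [Field k] : Rc2 k :=
  ⟨(X 0 : MvPolynomial (Fin 2) k) ^ 2, Algebra.subset_adjoin (Set.mem_insert _ _)⟩

/-- The element `m³` of `R'`. -/
noncomputable def mm3 (k : Type u) [Field k] : Rc2 k :=
  ⟨(X 0 : MvPolynomial (Fin 2) k) ^ 3,
    Algebra.subset_adjoin (Set.mem_insert_of_mem _ (Set.mem_insert _ _))⟩

/-- The element `n²` of `R'`. -/
noncomputable def nn2 (k : Type u) [Field k] : Rc2 k :=
  ⟨(X 1 : MvPolynomial (Fin 2) k) ^ 2,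
    Algebra.subset_adjoin (Set.mem_insert_of_mem _ (Set.mem_insert_of_mem _
      (Set.mem_insert _ _)))⟩

/-- The element `n³` of `R'`. -/
noncomputable def nn3 (k : Type u) [Field k] : Rc2 k :=
  ⟨(X 1 : MvPolynomial (Fin 2) k) ^ 3,
    Algebra.subset_adjoin (Set.mem_insert_of_mem _ (Set.mem_insert_of_mem _
      (Set.mem_insert_of_mem _ rfl)))⟩

/-- Left multiplication of a 2×2 matrix over `M` by the matrix `[[m³, −m²],[m⁴, −m³]]`. -/
noncomputable def xiMap (k : Type u) [Field k] (M : Type v) [AddCommGroup M]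
    [Module (Rc2 k) M] (A : Fin 2 → Fin 2 → M) : Fin 2 → Fin 2 → M :=
  ![![mm3 k • A 0 0 - mm2 k • A 1 0, mm3 k • A 0 1 - mm2 k • A 1 1],
    ![(mm2 k * mm2 k) • A 0 0 - mm3 k • A 1 0, (mm2 k * mm2 k) • A 0 1 - mm3 k • A 1 1]]

/-- Right multiplication of a 2×2 matrix over `M` by the matrix `[[n³, n⁴],[−n², −n³]]`. -/
noncomputable def etaMap (k : Type u) [Field k] (M : Type v) [AddCommGroup M]
    [Module (Rc2 k) M] (A : Fin 2 → Fin 2 → M) : Fin 2 → Fin 2 → M :=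
  ![![nn3 k • A 0 0 - nn2 k • A 0 1, (nn2 k * nn2 k) • A 0 0 - nn3 k • A 0 1],
    ![nn3 k • A 1 0 - nn2 k • A 1 1, (nn2 k * nn2 k) • A 1 0 - nn3 k • A 1 1]]

/-- Property [P2] for an `R'`-module `M`: with `N` the 2×2 matrices over `M`, the complex
`N →ξη N →(ξ,η) N ⊕ N` is exact in the middle. -/
noncomputable def HasP2 (k : Type u) [Field k] (M : Type v) [AddCommGroup M]
    [Module (Rc2 k) M] : Prop :=
  Function.Exact (fun A : Fin 2 → Fin 2 → M => xiMap k M (etaMap k M A))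
    (fun A : Fin 2 → Fin 2 → M => (xiMap k M A, etaMap k M A))

/-!
Write `x = ξ` and `y = η`. These are commuting additive endomorphisms of `N(M)` with
`x² = y² = 0`, natural in `M`, and [P2] says exactly that `ker x ∩ ker y ⊆ im (x y)`.
A short exact sequence of modules yields a short exact sequence of the `N(Mᵢ)` compatible
with `x` and `y`, and each case of two-out-of-three is a diagram chase. Besides [P2] itself,
the chases use two of its consequences for a commuting square-zero pair: a pair `(a₁, a₂)`
with `x a₁ = 0`, `y a₂ = 0`, `y a₁ = x a₂` is `(x a, y a)` for some `a`, and
`ker (x y) = im x + im y`.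
-/

theorem Function.Exact.comp_left {M₁ M₂ M₃ : Type*} [Zero M₃] {f : M₁ → M₂}
    {g : M₂ → M₃} (h : Function.Exact f g) (ι : Type*) :
    Function.Exact (f ∘ · : (ι → M₁) → ι → M₂) (g ∘ ·) := by
  intro b
  constructor
  · intro hb
    choose a ha using fun i => (h (b i)).mp (congrFun hb i)
    exact ⟨a, funext ha⟩
  · rintro ⟨a, rfl⟩
    funext i
    exact h.apply_apply_eq_zero (a i)

section CommSqZeroPair

variable {N N₁ N₂ N₃ : Type*} [AddCommGroup N] [AddCommGroup N₁] [AddCommGroup N₂]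
  [AddCommGroup N₃] {x y : N →+ N}

structure IsCommSqZero (x y : N →+ N) : Prop where
  sq_left : ∀ a, x (x a) = 0
  sq_right : ∀ a, y (y a) = 0
  comm : Function.Commute x y

def KerInfKerLeRangeComp (x y : N →+ N) : Prop :=
  ∀ c, x c = 0 → y c = 0 → ∃ u, x (y u) = c

theorem IsCommSqZero.exact_iff (h : IsCommSqZero x y) :
    Function.Exact (fun c => x (y c)) (fun c => (x c, y c)) ↔ KerInfKerLeRangeComp x y := by
  refine ⟨fun hex c hx hy => (hex c).mp (Prod.ext hx hy), fun hK c => ⟨fun hc => ?_, ?_⟩⟩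
  · exact hK c (congrArg Prod.fst hc) (congrArg Prod.snd hc)
  · rintro ⟨u, rfl⟩
    exact Prod.ext (h.sq_left _) ((h.comm _).symm.trans <| by rw [h.sq_right, map_zero]; rfl)

theorem KerInfKerLeRangeComp.exists_eq_of_compatible (hK : KerInfKerLeRangeComp x y)
    (h : IsCommSqZero x y) {a₁ a₂ : N} (h₁ : x a₁ = 0) (h₂ : y a₂ = 0)
    (h₁₂ : y a₁ = x a₂) :
    ∃ a, x a = a₁ ∧ y a = a₂ := by
  obtain ⟨u, hu⟩ := hK (y a₁) (by rw [h.comm, h₁, map_zero]) (h.sq_right a₁)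
  obtain ⟨v, hv⟩ := hK (a₁ - x u) (by rw [map_sub, h₁, h.sq_left, sub_zero])
    (by rw [map_sub, ← hu, h.comm, sub_self])
  have hx : x (u + y v) = a₁ := by rw [map_add, hv, add_sub_cancel]
  obtain ⟨s, hs⟩ := hK (a₂ - y (u + y v)) (by rw [map_sub, h.comm, hx, h₁₂, sub_self])
    (by rw [map_sub, h.sq_right, sub_zero, h₂])
  refine ⟨u + y v + x s, ?_, ?_⟩
  · rw [map_add, h.sq_left, add_zero, hx]
  · rw [map_add, ← h.comm, hs, add_sub_cancel]

theorem KerInfKerLeRangeComp.exists_add_eq_of_map_map_eq_zero (hK : KerInfKerLeRangeComp x y)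
    (h : IsCommSqZero x y) {c : N} (hc : x (y c) = 0) : ∃ p q, x p + y q = c := by
  obtain ⟨u, hu⟩ := hK (x c) (h.sq_left c) (by rw [← h.comm, hc])
  obtain ⟨v, hv⟩ := hK (y (c - y u)) (by rw [h.comm, map_sub, hu, sub_self, map_zero])
    (h.sq_right _)
  obtain ⟨w, hw⟩ := hK (c - y u - x v)
    (by rw [map_sub, map_sub, hu, sub_self, h.sq_left, sub_zero])
    (by rw [map_sub, ← hv, ← h.comm, sub_self])
  exact ⟨v + y w, u, by rw [map_add, hw]; abel⟩

variable {x₁ y₁ : N₁ →+ N₁} {x₂ y₂ : N₂ →+ N₂} {x₃ y₃ : N₃ →+ N₃}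
  {F : N₁ →+ N₂} {G : N₂ →+ N₃}

open Function

theorem KerInfKerLeRangeComp.of_left_of_middle (P₁ : KerInfKerLeRangeComp x₁ y₁)
    (P₂ : KerInfKerLeRangeComp x₂ y₂)
    (h₁ : IsCommSqZero x₁ y₁) (h₂ : IsCommSqZero x₂ y₂)
    (hFx : Semiconj F x₁ x₂) (hFy : Semiconj F y₁ y₂)
    (hGx : Semiconj G x₂ x₃) (hGy : Semiconj G y₂ y₃)
    (hF : Injective F) (hG : Surjective G) (hFG : Exact F G) :
    KerInfKerLeRangeComp x₃ y₃ := by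
  intro c hxc hyc
  obtain ⟨b, rfl⟩ := hG c
  obtain ⟨a₁, ha₁⟩ := (hFG (x₂ b)).mp (by rw [hGx, hxc])
  obtain ⟨a₂, ha₂⟩ := (hFG (y₂ b)).mp (by rw [hGy, hyc])
  obtain ⟨a, hax, hay⟩ := P₁.exists_eq_of_compatible h₁
    (hF <| by rw [hFx, ha₁, h₂.sq_left, map_zero])
    (hF <| by rw [hFy, ha₂, h₂.sq_right, map_zero])
    (hF <| by rw [hFy, hFx, ha₁, ha₂, h₂.comm])
  obtain ⟨w, hw⟩ := P₂ (b - F a)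
    (by rw [map_sub, ← hFx, hax, ha₁, sub_self])
    (by rw [map_sub, ← hFy, hay, ha₂, sub_self])
  refine ⟨G w, ?_⟩
  rw [← hGy, ← hGx, hw, map_sub, hFG.apply_apply_eq_zero, sub_zero]

theorem KerInfKerLeRangeComp.of_left_of_right (P₁ : KerInfKerLeRangeComp x₁ y₁)
    (P₃ : KerInfKerLeRangeComp x₃ y₃)
    (h₂ : IsCommSqZero x₂ y₂)
    (hFx : Semiconj F x₁ x₂) (hFy : Semiconj F y₁ y₂)
    (hGx : Semiconj G x₂ x₃) (hGy : Semiconj G y₂ y₃)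
    (hF : Injective F) (hG : Surjective G) (hFG : Exact F G) :
    KerInfKerLeRangeComp x₂ y₂ := by
  intro b hxb hyb
  obtain ⟨w, hw⟩ := P₃ (G b) (by rw [← hGx, hxb, map_zero]) (by rw [← hGy, hyb, map_zero])
  obtain ⟨u, rfl⟩ := hG w
  obtain ⟨a, ha⟩ := (hFG (b - x₂ (y₂ u))).mp (by rw [map_sub, hGx, hGy, hw, sub_self])
  obtain ⟨s, hs⟩ := P₁ a
    (hF <| by rw [hFx, ha, map_sub, hxb, h₂.sq_left, sub_zero, map_zero])
    (hF <| by
      rw [hFy, ha, map_sub, hyb, ← h₂.comm, h₂.sq_right, map_zero, sub_zero, map_zero])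
  refine ⟨u + F s, ?_⟩
  rw [← hs, hFx, hFy] at ha
  rw [map_add, map_add, ha, add_sub_cancel]

theorem KerInfKerLeRangeComp.of_middle_of_right (P₂ : KerInfKerLeRangeComp x₂ y₂)
    (P₃ : KerInfKerLeRangeComp x₃ y₃)
    (h₂ : IsCommSqZero x₂ y₂) (h₃ : IsCommSqZero x₃ y₃)
    (hFx : Semiconj F x₁ x₂) (hFy : Semiconj F y₁ y₂)
    (hGx : Semiconj G x₂ x₃) (hGy : Semiconj G y₂ y₃)
    (hF : Injective F) (hG : Surjective G) (hFG : Exact F G) :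
    KerInfKerLeRangeComp x₁ y₁ := by
  intro a hxa hya
  obtain ⟨b, hb⟩ := P₂ (F a) (by rw [← hFx, hxa, map_zero]) (by rw [← hFy, hya, map_zero])
  obtain ⟨p, q, hpq⟩ := P₃.exists_add_eq_of_map_map_eq_zero h₃ (c := G b)
    (by rw [← hGy, ← hGx, hb, hFG.apply_apply_eq_zero])
  obtain ⟨p, rfl⟩ := hG p
  obtain ⟨q, rfl⟩ := hG q
  obtain ⟨s, hs⟩ := (hFG (b - x₂ p - y₂ q)).mp
    (by rw [map_sub, map_sub, hGx, hGy, ← hpq]; abel)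
  have hp : x₂ (y₂ (x₂ p)) = 0 := by rw [h₂.comm, h₂.sq_left, map_zero]
  refine ⟨s, hF ?_⟩
  rw [hFx, hFy, hs]
  simp only [map_sub, hp, h₂.sq_right, sub_zero, hb]

end CommSqZeroPair

section TwoByTwo

variable (k : Type u) [Field k] (M : Type*) [AddCommGroup M] [Module (Rc2 k) M]

theorem mm3_mul_mm3 : mm3 k * mm3 k = mm2 k * (mm2 k * mm2 k) :=
  Subtype.ext <|
    show (X 0 : MvPolynomial (Fin 2) k) ^ 3 * X 0 ^ 3 = X 0 ^ 2 * (X 0 ^ 2 * X 0 ^ 2) by ring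

theorem nn3_mul_nn3 : nn3 k * nn3 k = nn2 k * (nn2 k * nn2 k) :=
  Subtype.ext <|
    show (X 1 : MvPolynomial (Fin 2) k) ^ 3 * X 1 ^ 3 = X 1 ^ 2 * (X 1 ^ 2 * X 1 ^ 2) by ring

noncomputable def xiHom : (Fin 2 → Fin 2 → M) →+ (Fin 2 → Fin 2 → M) :=
  AddMonoidHom.mk' (xiMap k M) fun A B => by
    ext i j
    fin_cases i <;> fin_cases j <;> simp only [xiMap, Pi.add_apply, smul_add,
        Fin.isValue, Fin.mk_one, Fin.zero_eta, Matrix.cons_val', Matrix.cons_val_zero,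
        Matrix.cons_val_one, Matrix.cons_val_fin_one] <;>
      module

noncomputable def etaHom : (Fin 2 → Fin 2 → M) →+ (Fin 2 → Fin 2 → M) :=
  AddMonoidHom.mk' (etaMap k M) fun A B => by
    ext i j
    fin_cases i <;> fin_cases j <;> simp only [etaMap, Pi.add_apply, smul_add,
        Fin.isValue, Fin.mk_one, Fin.zero_eta, Matrix.cons_val', Matrix.cons_val_zero,
        Matrix.cons_val_one, Matrix.cons_val_fin_one] <;>
      module

theorem isCommSqZero_xiHom_etaHom : IsCommSqZero (xiHom k M) (etaHom k M) where
  sq_left A := by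
    ext i j
    fin_cases i <;> fin_cases j <;>
      simp [xiHom, xiMap, smul_sub, smul_smul, mm3_mul_mm3, mul_comm, mul_left_comm]
  sq_right A := by
    ext i j
    fin_cases i <;> fin_cases j <;>
      simp [etaHom, etaMap, smul_sub, smul_smul, nn3_mul_nn3, mul_comm, mul_left_comm]
  comm A := by
    ext i j
    fin_cases i <;> fin_cases j <;> simp only [xiHom, etaHom, AddMonoidHom.mk'_apply, xiMap, etaMap,
        Fin.isValue, Fin.mk_one, Fin.zero_eta, Matrix.cons_val', Matrix.cons_val_zero,
        Matrix.cons_val_one, Matrix.cons_val_fin_one] <;>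
      module

theorem hasP2_iff_kerInfKerLeRangeComp :
    HasP2 k M ↔ KerInfKerLeRangeComp (xiHom k M) (etaHom k M) :=
  (isCommSqZero_xiHom_etaHom k M).exact_iff

variable {k M} {M' : Type*} [AddCommGroup M'] [Module (Rc2 k) M']

noncomputable def mapEntries (f : M →ₗ[Rc2 k] M') :
    (Fin 2 → Fin 2 → M) →+ (Fin 2 → Fin 2 → M') :=
  (f.toAddMonoidHom.compLeft (Fin 2)).compLeft (Fin 2)

theorem semiconj_mapEntries_xiHom (f : M →ₗ[Rc2 k] M') :
    Function.Semiconj (mapEntries f) (xiHom k M) (xiHom k M') := by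
  intro A
  ext i j
  fin_cases i <;> fin_cases j <;> simp [mapEntries, xiHom, xiMap]

theorem semiconj_mapEntries_etaHom (f : M →ₗ[Rc2 k] M') :
    Function.Semiconj (mapEntries f) (etaHom k M) (etaHom k M') := by
  intro A
  ext i j
  fin_cases i <;> fin_cases j <;> simp [mapEntries, etaHom, etaMap]

end TwoByTwo

theorem stmt_8 (k : Type u) [Field k] (M₁ M₂ M₃ : Type v)
    [AddCommGroup M₁] [Module (Rc2 k) M₁]
    [AddCommGroup M₂] [Module (Rc2 k) M₂]
    [AddCommGroup M₃] [Module (Rc2 k) M₃]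
    (f : M₁ →ₗ[Rc2 k] M₂) (g : M₂ →ₗ[Rc2 k] M₃)
    (hf : Function.Injective f) (hg : Function.Surjective g)
    (hfg : Function.Exact f g) :
    (HasP2 k M₁ ∧ HasP2 k M₂ → HasP2 k M₃) ∧
    (HasP2 k M₁ ∧ HasP2 k M₃ → HasP2 k M₂) ∧
    (HasP2 k M₂ ∧ HasP2 k M₃ → HasP2 k M₁) := by
  have hF : Function.Injective (mapEntries f) := hf.comp_left.comp_left
  have hG : Function.Surjective (mapEntries g) := hg.comp_left.comp_left
  have hFG : Function.Exact (mapEntries f) (mapEntries g) := (hfg.comp_left _).comp_left _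
  have hFx := semiconj_mapEntries_xiHom f
  have hFy := semiconj_mapEntries_etaHom f
  have hGx := semiconj_mapEntries_xiHom g
  have hGy := semiconj_mapEntries_etaHom g
  simp only [hasP2_iff_kerInfKerLeRangeComp]
  refine ⟨fun ⟨P₁, P₂⟩ => ?_, fun ⟨P₁, P₃⟩ => ?_, fun ⟨P₂, P₃⟩ => ?_⟩
  · exact P₁.of_left_of_middle P₂ (isCommSqZero_xiHom_etaHom k M₁)
      (isCommSqZero_xiHom_etaHom k M₂) hFx hFy hGx hGy hF hG hFG
  · exact P₁.of_left_of_right P₃ (isCommSqZero_xiHom_etaHom k M₂) hFx hFy hGx hGy hF hG hFG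
  · exact P₂.of_middle_of_right P₃ (isCommSqZero_xiHom_etaHom k M₂)
      (isCommSqZero_xiHom_etaHom k M₃) hFx hFy hGx hGy hF hG hFG
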